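/- Let G be a finite undirected graph with n vertices in which every vertex has positive degree, and let H be its double cover. Let α ∈ (0,1], let s and r be nonnegative vectors on V_H such that apr_H(α, s, r) is entrywise nonnegative, and set p = σ∘apr_H(α, s, r). Then for every j with 1 ≤ j ≤ 2n − 1, it holds that p[vol(S_j^p)] ≤ α·(s[vol(S_j^p)] + r[vol(S_j^p)]) + (1 − α)·(1/2)·( p[vol(S_j^p) − |∂(S_j^p)|] + p[vol(S_j^p) + |∂(S_j^p)|] ), where q[·] denotes the Lovász–Simonovits curve of the vector q on H. -/

import Mathlib

open Finset

namespace Paper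

variable {V : Type*} [Fintype V] [DecidableEq V]

/-- The degree of a vertex `v` in the graph `G`. -/
noncomputable def deg (G : SimpleGraph V) (v : V) : ℕ := {u | G.Adj v u}.ncard

/-- The volume of a set of vertices: the sum of the degrees of its members. -/
noncomputable def vol (G : SimpleGraph V) (S : Finset V) : ℕ := ∑ v ∈ S, deg G v

/-- The number of ordered pairs `(u,v)` with `u ∈ S`, `v ∈ T` and `{u,v} ∈ E(G)`.
For disjoint `S`, `T` this is the number of edges between `S` and `T`, and
`cutEdges G S Sᶜ = |∂(S)|`. -/
noncomputable def cutEdges (G : SimpleGraph V) (S T : Finset V) : ℕ :=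
  {e : V × V | e.1 ∈ S ∧ e.2 ∈ T ∧ G.Adj e.1 e.2}.ncard

/-- The conductance `Φ(S) = |∂(S)| / min(vol(S), vol(V \ S))`. -/
noncomputable def conductance (G : SimpleGraph V) (S : Finset V) : ℝ :=
  (cutEdges G S Sᶜ : ℝ) / min (vol G S : ℝ) (vol G Sᶜ : ℝ)

/-- The bipartiteness ratio `β(L,R) = 1 - 2 e(L,R) / vol(L ∪ R)`. -/
noncomputable def bipartiteness (G : SimpleGraph V) (L R : Finset V) : ℝ :=
  1 - 2 * (cutEdges G L R : ℝ) / (vol G (L ∪ R) : ℝ)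

/-- The double cover of `G`: on vertex set `V ⊕ V` (with `Sum.inl v = v₁` and
`Sum.inr v = v₂`), for every edge `{u,v}` of `G` there are edges `{u₁,v₂}` and `{u₂,v₁}`. -/
def doubleCover (G : SimpleGraph V) : SimpleGraph (V ⊕ V) :=
  SimpleGraph.fromRel (fun x y => ∃ u v, x = Sum.inl u ∧ y = Sum.inr v ∧ G.Adj u v)

open scoped Classical in
/-- One step of the lazy random walk `W = (1/2)(I + D⁻¹A)`, acting on row vectors:
`p ↦ pW`, so `(lazyWalk G p) x = (1/2) p(x) + (1/2) ∑_{y ~ x} p(y)/deg(y)`. -/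
noncomputable def lazyWalk (G : SimpleGraph V) (p : V → ℝ) : V → ℝ :=
  fun x => (1/2) * p x + (1/2) * ∑ y, (if G.Adj y x then p y / (deg G y : ℝ) else 0)

/-- The simplify operator `σ` on vectors indexed by the double cover:
`(σ∘p)(u₁) = max(0, p(u₁) - p(u₂))` and `(σ∘p)(u₂) = max(0, p(u₂) - p(u₁))`. -/
noncomputable def simplify (p : V ⊕ V → ℝ) : V ⊕ V → ℝ :=
  Sum.elim (fun u => max 0 (p (Sum.inl u) - p (Sum.inr u)))
           (fun u => max 0 (p (Sum.inr u) - p (Sum.inl u)))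

/-- `q` is the personalised Pagerank vector `pr(α, s)`, i.e. it satisfies
`q = α s + (1-α) q W`. -/
def IsPagerank (G : SimpleGraph V) (α : ℝ) (s q : V → ℝ) : Prop :=
  ∀ x, q x = α * s x + (1 - α) * lazyWalk G q x

/-- `p` is an approximate Pagerank vector `apr(α, s, r)` with residual `r`, i.e.
`p + pr(α, r) = pr(α, s)`. -/
def IsApr (G : SimpleGraph V) (α : ℝ) (s r p : V → ℝ) : Prop :=
  ∃ qs qr, IsPagerank G α s qs ∧ IsPagerank G α r qr ∧ ∀ x, p x + qr x = qs x

/-- Given an ordering `ord` of the vertices, the sweep set `S_j` consists of the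
first `j` vertices in this ordering. -/
def sweepSet {W : Type*} [Fintype W] (ord : Fin (Fintype.card W) ≃ W) (j : ℕ) :
    Finset W :=
  Finset.univ.filter fun x => (ord.symm x : ℕ) < j

/-- The size of the support `supp(p) = {u : p(u) ≠ 0}` of a vector. -/
noncomputable def suppCard {W : Type*} (p : W → ℝ) : ℕ := {x | p x ≠ 0}.ncard

/-- The Lovász–Simonovits curve of a vector `p`:
`p[x] = max { ∑_u w(u) p(u) : w ∈ [0,1]^V, ∑_u w(u) deg(u) = x }`. -/
noncomputable def lsCurve (G : SimpleGraph V) (p : V → ℝ) (x : ℝ) : ℝ :=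
  sSup {y | ∃ w : V → ℝ, (∀ u, 0 ≤ w u ∧ w u ≤ 1) ∧
    (∑ u, w u * (deg G u : ℝ)) = x ∧ y = ∑ u, w u * p u}

/-! ### Directed graphs -/

/-- Out-degree of `u` in the digraph with edge relation `E`. -/
noncomputable def degOut (E : V → V → Prop) (u : V) : ℕ := {v | E u v}.ncard

/-- In-degree of `u` in the digraph with edge relation `E`. -/
noncomputable def degIn (E : V → V → Prop) (u : V) : ℕ := {v | E v u}.ncard

/-- Out-volume `vol_out(S) = ∑_{u ∈ S} deg_out(u)`. -/
noncomputable def volOut (E : V → V → Prop) (S : Finset V) : ℕ := ∑ u ∈ S, degOut E u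

/-- In-volume `vol_in(S) = ∑_{u ∈ S} deg_in(u)`. -/
noncomputable def volIn (E : V → V → Prop) (S : Finset V) : ℕ := ∑ u ∈ S, degIn E u

/-- The number of directed edges from `L` to `R`. -/
noncomputable def eDir (E : V → V → Prop) (L R : Finset V) : ℕ :=
  {e : V × V | e.1 ∈ L ∧ e.2 ∈ R ∧ E e.1 e.2}.ncard

/-- The total number of directed edges of the digraph. -/
noncomputable def numEdges (E : V → V → Prop) : ℕ := {e : V × V | E e.1 e.2}.ncard

/-- The flow ratio `F(L,R) = 1 - 2 e(L,R) / (vol_out(L) + vol_in(R))`. -/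
noncomputable def flowRatio (E : V → V → Prop) (L R : Finset V) : ℝ :=
  1 - 2 * (eDir E L R : ℝ) / ((volOut E L : ℝ) + (volIn E R : ℝ))

/-- The semi-double cover of a digraph: on vertex set `V ⊕ V` (with `Sum.inl v = v₁`,
`Sum.inr v = v₂`), for every directed edge `(u,v)` there is an undirected edge `{u₁, v₂}`. -/
def semiDoubleCover (E : V → V → Prop) : SimpleGraph (V ⊕ V) :=
  SimpleGraph.fromRel (fun x y => ∃ u v, x = Sum.inl u ∧ y = Sum.inr v ∧ E u v)

/-! ### The evolving set process -/

/-- `χ_v W χ_S^T`: the probability that one step of the lazy random walk started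
at `v` ends in `S`. -/
noncomputable def walkToSet (H : SimpleGraph V) (S : Finset V) (v : V) : ℝ :=
  (1/2) * (if v ∈ S then (1:ℝ) else 0)
    + (1/2) * (({y | H.Adj v y ∧ y ∈ S}.ncard : ℝ) / (deg H v : ℝ))

/-- The transition kernel `K(S, S')` of the evolving set process: the probability,
over a uniformly random threshold `t ∈ [0,1]`, that `{v : χ_v W χ_S^T ≥ t} = S'`. -/
noncomputable def espKernel (H : SimpleGraph V) (S S' : Finset V) : ℝ :=
  (MeasureTheory.volume {t : ℝ | t ∈ Set.Icc (0:ℝ) 1 ∧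
    {v | t ≤ walkToSet H S v} = (S' : Set V)}).toReal

/-- The transition kernel `K̂(S,S') = (vol(S')/vol(S)) K(S,S')` of the volume-biased
evolving set process. -/
noncomputable def vbKernel (H : SimpleGraph V) (S S' : Finset V) : ℝ :=
  ((vol H S' : ℝ) / (vol H S : ℝ)) * espKernel H S S'

open scoped Classical in
/-- The probability that a sample path `(S₀, …, S_T)` of the volume-biased evolving
set process started from `S₀ = {x}` satisfies the property `P`. -/
noncomputable def pathProb (H : SimpleGraph V) (T : ℕ) (x : V)
    (P : (Fin (T+1) → Finset V) → Prop) : ℝ :=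
  ∑ f ∈ Finset.univ.filter (fun f : Fin (T+1) → Finset V => f 0 = {x} ∧ P f),
    ∏ i : Fin T, vbKernel H (f i.castSucc) (f i.succ)


/-!
Write `x̄` for the other copy of a vertex `x` of the double cover `H`. An approximate Pagerank
vector satisfies `p = α (s - r) + (1 - α) p W`, and `W` commutes with `x ↦ x̄`; subtracting the
equation at `x̄` from the one at `x` gives `σp(x) ≤ α (s(x) + r(x̄)) + (1 - α) (σp W)(x)`.
Sum this over a sweep set `S`. Because `S` is a level set of `σp / deg`, the left side is
`σp[vol S]`; the `s`- and `r`-terms are at most their curves at `vol S` (swapping the copies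
preserves volume). Finally, as in Lovász–Simonovits, `∑_{x ∈ S} (q W)(x)` is the average of
`∑ w q` over two weightings `w` with `∑ w deg = vol S ∓ |∂S|`.
-/

open scoped Classical

section LovaszSimonovits

omit [DecidableEq V] in
theorem sum_mul_le_lsCurve (G : SimpleGraph V) (q : V → ℝ) {w : V → ℝ}
    (hw : ∀ u, 0 ≤ w u ∧ w u ≤ 1) :
    ∑ u, w u * q u ≤ lsCurve G q (∑ u, w u * (deg G u : ℝ)) := by
  refine le_csSup ⟨∑ u, |q u|, ?_⟩ ⟨w, hw, rfl, rfl⟩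
  rintro _ ⟨w', hw', -, rfl⟩
  refine sum_le_sum fun u _ => ?_
  calc w' u * q u ≤ w' u * |q u| := mul_le_mul_of_nonneg_left (le_abs_self _) (hw' u).1
    _ ≤ |q u| := mul_le_of_le_one_left (abs_nonneg _) (hw' u).2

theorem sum_ite_mem_mul (S : Finset V) (f : V → ℝ) :
    ∑ u, (if u ∈ S then 1 else 0) * f u = ∑ u ∈ S, f u := by
  simp [ite_mul]

theorem sum_ite_mem_mul_deg (G : SimpleGraph V) (S : Finset V) :
    ∑ u, (if u ∈ S then (1 : ℝ) else 0) * (deg G u : ℝ) = (vol G S : ℝ) := by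
  rw [sum_ite_mem_mul, vol, Nat.cast_sum]

theorem sum_le_lsCurve_vol (G : SimpleGraph V) (q : V → ℝ) (S : Finset V) :
    ∑ u ∈ S, q u ≤ lsCurve G q (vol G S) := by
  have h := sum_mul_le_lsCurve G q (w := fun u => if u ∈ S then 1 else 0)
    (fun u => by split_ifs <;> norm_num)
  rwa [sum_ite_mem_mul_deg, sum_ite_mem_mul] at h

/-- Since `S` is a level set of `q / deg`, moving weight from `S` to outside it at equal total
degree cannot increase `∑ w q`. -/
theorem lsCurve_vol_eq_sum_of_threshold (G : SimpleGraph V) (q : V → ℝ) (S : Finset V)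
    (τ : ℝ) (hin : ∀ u ∈ S, τ * deg G u ≤ q u) (hout : ∀ u ∉ S, q u ≤ τ * deg G u) :
    lsCurve G q (vol G S) = ∑ u ∈ S, q u := by
  set χ : V → ℝ := fun u => if u ∈ S then 1 else 0
  have hχ : ∀ u, 0 ≤ χ u ∧ χ u ≤ 1 := fun u => by simp only [χ]; split_ifs <;> norm_num
  refine le_antisymm (csSup_le ⟨_, χ, hχ, sum_ite_mem_mul_deg G S, rfl⟩ ?_)
    (sum_le_lsCurve_vol G q S)
  rintro _ ⟨w, hw, hvol, rfl⟩
  have hexchange : ∀ u, (w u - χ u) * q u ≤ (w u - χ u) * (τ * deg G u) := by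
    intro u
    by_cases hu : u ∈ S
    · simpa [χ, hu] using mul_le_mul_of_nonpos_left (hin u hu) (by linarith [(hw u).2])
    · simpa [χ, hu] using mul_le_mul_of_nonneg_left (hout u hu) (hw u).1
  have hsum := sum_le_sum fun u (_ : u ∈ univ) => hexchange u
  have hq : ∑ u, χ u * q u = ∑ u ∈ S, q u := sum_ite_mem_mul S q
  have hdeg : ∑ u, (w u - χ u) * (τ * deg G u) = 0 := by
    simp only [sub_mul, sum_sub_distrib, mul_left_comm _ τ, ← mul_sum, hvol, χ,
      sum_ite_mem_mul_deg, sub_self, mul_zero]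
  rw [hdeg] at hsum
  simp only [sub_mul, sum_sub_distrib, hq] at hsum
  linarith

end LovaszSimonovits

section Cuts

variable (G : SimpleGraph V)

omit [DecidableEq V] in
theorem deg_eq_card_filter (v : V) : deg G v = (univ.filter (G.Adj v)).card := by
  rw [deg, ← Set.ncard_coe_finset]
  congr 1
  ext u
  simp

omit [Fintype V] [DecidableEq V] in
theorem cutEdges_comm (S T : Finset V) : cutEdges G S T = cutEdges G T S := by
  rw [cutEdges, cutEdges, ← Set.ncard_image_of_injective _ Prod.swap_injective]
  congr 1
  ext ⟨a, b⟩
  simp only [Set.image_swap_eq_preimage_swap, Set.mem_preimage, Set.mem_ofPred_eq,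
    Prod.swap_prod_mk, G.adj_comm b a]
  tauto

omit [Fintype V] [DecidableEq V] in
theorem cutEdges_eq_sum (S T : Finset V) :
    cutEdges G S T = ∑ y ∈ S, (T.filter (G.Adj y)).card := by
  have hset : {e : V × V | e.1 ∈ S ∧ e.2 ∈ T ∧ G.Adj e.1 e.2}
      = ↑((S ×ˢ T).filter fun e => G.Adj e.1 e.2) := by
    ext ⟨a, b⟩
    simp [and_assoc]
  rw [cutEdges, hset, Set.ncard_coe_finset]
  simp only [card_filter, sum_product]

omit [DecidableEq V] in
theorem card_filter_adj_le_deg (S : Finset V) (y : V) :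
    ((S.filter (G.Adj y)).card : ℝ) ≤ deg G y := by
  rw [deg_eq_card_filter]
  exact_mod_cast card_le_card (filter_subset_filter _ (subset_univ S))

theorem sum_card_filter_adj_add_cutEdges (S : Finset V) :
    ∑ y ∈ S, (S.filter (G.Adj y)).card + cutEdges G S Sᶜ = vol G S := by
  rw [cutEdges_eq_sum, ← sum_add_distrib, vol]
  refine sum_congr rfl fun y _ => ?_
  rw [deg_eq_card_filter, ← card_union_of_disjoint
    (disjoint_compl_right.mono (filter_subset _ _) (filter_subset _ _)), ← filter_union,
    union_compl]

end Cuts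

section LazyWalk

variable (G : SimpleGraph V)

omit [DecidableEq V] in
theorem lazyWalk_sub (p q : V → ℝ) (x : V) :
    lazyWalk G (p - q) x = lazyWalk G p x - lazyWalk G q x := by
  have hsummand : ∀ y, (if G.Adj y x then (p - q) y / deg G y else 0)
      = (if G.Adj y x then p y / deg G y else 0) - (if G.Adj y x then q y / deg G y else 0) := by
    intro y
    split_ifs <;> simp [sub_div]
  unfold lazyWalk
  rw [sum_congr rfl fun y _ => hsummand y, sum_sub_distrib, Pi.sub_apply]
  ring

omit [DecidableEq V] in
theorem lazyWalk_mono {p q : V → ℝ} (hpq : ∀ y, p y ≤ q y) (x : V) :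
    lazyWalk G p x ≤ lazyWalk G q x := by
  unfold lazyWalk
  gcongr with y
  · exact hpq x
  · split_ifs
    · exact div_le_div_of_nonneg_right (hpq y) (Nat.cast_nonneg _)
    · rfl

omit [DecidableEq V] in
theorem lazyWalk_nonneg {q : V → ℝ} (hq : ∀ y, 0 ≤ q y) (x : V) : 0 ≤ lazyWalk G q x := by
  simpa [lazyWalk] using lazyWalk_mono G (p := 0) hq x

noncomputable def neighborFraction (S : Finset V) (y : V) : ℝ :=
  (S.filter (G.Adj y)).card / deg G y

omit [DecidableEq V] in
theorem neighborFraction_mul_deg (S : Finset V) (y : V) :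
    neighborFraction G S y * deg G y = (S.filter (G.Adj y)).card := by
  rcases eq_or_ne (deg G y : ℝ) 0 with h | h
  · have := card_filter_adj_le_deg G S y
    rw [h] at this ⊢
    rw [mul_zero]
    exact le_antisymm (by positivity) this
  · exact div_mul_cancel₀ _ h

omit [DecidableEq V] in
theorem sum_lazyWalk_eq (q : V → ℝ) (S : Finset V) :
    ∑ x ∈ S, lazyWalk G q x
      = 1/2 * ∑ x ∈ S, q x + 1/2 * ∑ y, neighborFraction G S y * q y := by
  simp only [lazyWalk, sum_add_distrib, ← mul_sum]
  congr 2
  rw [sum_comm]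
  refine sum_congr rfl fun y _ => ?_
  rw [← sum_filter, sum_const, nsmul_eq_mul, neighborFraction]
  ring

noncomputable def lowerWeight (S : Finset V) (y : V) : ℝ :=
  if y ∈ S then neighborFraction G S y else 0

noncomputable def upperWeight (S : Finset V) (y : V) : ℝ :=
  if y ∈ S then 1 else neighborFraction G S y

omit [DecidableEq V] in
theorem neighborFraction_mem_Icc (S : Finset V) (y : V) :
    0 ≤ neighborFraction G S y ∧ neighborFraction G S y ≤ 1 :=
  ⟨by unfold neighborFraction; positivity,
    div_le_one_of_le₀ (card_filter_adj_le_deg G S y) (Nat.cast_nonneg _)⟩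

theorem lowerWeight_mem_Icc (S : Finset V) (y : V) :
    0 ≤ lowerWeight G S y ∧ lowerWeight G S y ≤ 1 := by
  unfold lowerWeight
  split_ifs
  exacts [neighborFraction_mem_Icc G S y, by norm_num]

theorem upperWeight_mem_Icc (S : Finset V) (y : V) :
    0 ≤ upperWeight G S y ∧ upperWeight G S y ≤ 1 := by
  unfold upperWeight
  split_ifs
  exacts [by norm_num, neighborFraction_mem_Icc G S y]

theorem sum_lowerWeight_mul_deg (S : Finset V) :
    ∑ u, lowerWeight G S u * deg G u = (vol G S : ℝ) - cutEdges G S Sᶜ := by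
  simp only [lowerWeight, ite_mul, zero_mul, sum_ite_mem, univ_inter, neighborFraction_mul_deg]
  rw [← sum_card_filter_adj_add_cutEdges G S]
  push_cast
  ring

theorem sum_upperWeight_mul_deg (S : Finset V) :
    ∑ u, upperWeight G S u * deg G u = (vol G S : ℝ) + cutEdges G S Sᶜ := by
  have hin : ∀ u ∈ S, upperWeight G S u * deg G u = deg G u := fun u hu => by
    rw [upperWeight, if_pos hu, one_mul]
  have hout : ∀ u ∈ Sᶜ, upperWeight G S u * deg G u = (S.filter (G.Adj u)).card :=
      fun u hu => by
    rw [upperWeight, if_neg (mem_compl.1 hu), neighborFraction_mul_deg]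
  rw [← sum_add_sum_compl S, sum_congr rfl hin, sum_congr rfl hout, cutEdges_comm,
    cutEdges_eq_sum, vol]
  push_cast
  rfl

theorem sum_lazyWalk_eq_average (q : V → ℝ) (S : Finset V) :
    ∑ x ∈ S, lazyWalk G q x
      = 1/2 * ∑ u, lowerWeight G S u * q u + 1/2 * ∑ u, upperWeight G S u * q u := by
  have hsplit : ∀ u, lowerWeight G S u * q u + upperWeight G S u * q u
      = (if u ∈ S then 1 else 0) * q u + neighborFraction G S u * q u := by
    intro u
    unfold lowerWeight upperWeight
    split_ifs <;> ring
  rw [sum_lazyWalk_eq, ← sum_ite_mem_mul, ← mul_add, ← mul_add, ← sum_add_distrib,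
    ← sum_add_distrib, sum_congr rfl fun u _ => hsplit u]

theorem sum_lazyWalk_le_lsCurve (q : V → ℝ) (S : Finset V) :
    ∑ x ∈ S, lazyWalk G q x
      ≤ 1/2 * (lsCurve G q ((vol G S : ℝ) - cutEdges G S Sᶜ)
        + lsCurve G q ((vol G S : ℝ) + cutEdges G S Sᶜ)) := by
  have hlower := sum_mul_le_lsCurve G q (lowerWeight_mem_Icc G S)
  have hupper := sum_mul_le_lsCurve G q (upperWeight_mem_Icc G S)
  rw [sum_lowerWeight_mul_deg] at hlower
  rw [sum_upperWeight_mul_deg] at hupper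
  rw [sum_lazyWalk_eq_average]
  linarith

end LazyWalk

section DoubleCover

variable (G : SimpleGraph V)

omit [Fintype V] [DecidableEq V] in
theorem doubleCover_adj_swap (x y : V ⊕ V) :
    (doubleCover G).Adj x.swap y.swap ↔ (doubleCover G).Adj x y := by
  cases x <;> cases y <;> simp [doubleCover, G.adj_comm]

omit [Fintype V] [DecidableEq V] in
theorem deg_doubleCover_inl (u : V) : deg (doubleCover G) (Sum.inl u) = deg G u := by
  have hnbrs : {y | (doubleCover G).Adj (Sum.inl u) y} = Sum.inr '' {v | G.Adj u v} := by
    ext y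
    cases y <;> simp [doubleCover]
  rw [deg, hnbrs, Set.ncard_image_of_injective _ Sum.inr_injective, deg]

omit [Fintype V] [DecidableEq V] in
theorem deg_doubleCover_swap (x : V ⊕ V) :
    deg (doubleCover G) x.swap = deg (doubleCover G) x := by
  have hswap : Function.Involutive (@Sum.swap V V) := Sum.swap_swap
  have hnbrs : {y | (doubleCover G).Adj x.swap y} = Sum.swap '' {y | (doubleCover G).Adj x y} := by
    rw [hswap.image_eq_preimage_symm]
    ext y
    simp [← doubleCover_adj_swap G x.swap y]
  rw [deg, hnbrs, Set.ncard_image_of_injective _ hswap.injective, deg]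

omit [Fintype V] [DecidableEq V] in
theorem deg_doubleCover_pos (hdeg : ∀ v, 0 < deg G v) (x : V ⊕ V) :
    0 < deg (doubleCover G) x := by
  rcases x with u | u
  · rw [deg_doubleCover_inl]
    exact hdeg u
  · rw [← Sum.swap_inl, deg_doubleCover_swap, deg_doubleCover_inl]
    exact hdeg u

theorem sum_swap_le_lsCurve_vol (q : V ⊕ V → ℝ) (S : Finset (V ⊕ V)) :
    ∑ x ∈ S, q x.swap ≤ lsCurve (doubleCover G) q (vol (doubleCover G) S) := by
  set e := (Equiv.sumComm V V).toEmbedding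
  have hvol : vol (doubleCover G) (S.map e) = vol (doubleCover G) S := by
    simp only [vol, sum_map]
    exact sum_congr rfl fun x _ => deg_doubleCover_swap G x
  simpa [hvol, e] using sum_le_lsCurve_vol (doubleCover G) q (S.map e)

omit [DecidableEq V] in
theorem lazyWalk_doubleCover_swap (q : V ⊕ V → ℝ) (x : V ⊕ V) :
    lazyWalk (doubleCover G) q x.swap = lazyWalk (doubleCover G) (fun y => q y.swap) x := by
  unfold lazyWalk
  rw [← (Equiv.sumComm V V).sum_comp]
  simp only [Equiv.sumComm_apply, doubleCover_adj_swap, deg_doubleCover_swap]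

omit [Fintype V] [DecidableEq V] in
theorem simplify_apply (q : V ⊕ V → ℝ) (x : V ⊕ V) :
    simplify q x = max 0 (q x - q x.swap) := by
  cases x <;> rfl

omit [Fintype V] [DecidableEq V] in
theorem sub_swap_le_simplify (q : V ⊕ V → ℝ) (x : V ⊕ V) :
    q x - q x.swap ≤ simplify q x :=
  (simplify_apply q x).symm ▸ le_max_right _ _

omit [Fintype V] [DecidableEq V] in
theorem simplify_nonneg (q : V ⊕ V → ℝ) (x : V ⊕ V) : 0 ≤ simplify q x :=
  (simplify_apply q x).symm ▸ le_max_left _ _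

omit [DecidableEq V] in
theorem lazyWalk_sub_lazyWalk_swap_le (q : V ⊕ V → ℝ) (x : V ⊕ V) :
    lazyWalk (doubleCover G) q x - lazyWalk (doubleCover G) q x.swap
      ≤ lazyWalk (doubleCover G) (simplify q) x := by
  rw [lazyWalk_doubleCover_swap, ← lazyWalk_sub]
  exact lazyWalk_mono _ (sub_swap_le_simplify q) x

end DoubleCover

omit [DecidableEq V] in
theorem IsApr.eq_add_lazyWalk {G : SimpleGraph V} {α : ℝ} {s r p : V → ℝ}
    (h : IsApr G α s r p) (x : V) :
    p x = α * (s x - r x) + (1 - α) * lazyWalk G p x := by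
  obtain ⟨qs, qr, hqs, hqr, hsum⟩ := h
  have hp : p = qs - qr := funext fun y => eq_sub_of_add_eq (hsum y)
  rw [hp, lazyWalk_sub, Pi.sub_apply, hqs x, hqr x]
  ring

omit [DecidableEq V] in
theorem simplify_le_of_isApr (G : SimpleGraph V) {α : ℝ} (hα0 : 0 ≤ α) (hα1 : α ≤ 1)
    {s r p : V ⊕ V → ℝ} (hs : ∀ x, 0 ≤ s x) (hr : ∀ x, 0 ≤ r x)
    (happr : IsApr (doubleCover G) α s r p) (x : V ⊕ V) :
    simplify p x
      ≤ α * (s x + r x.swap) + (1 - α) * lazyWalk (doubleCover G) (simplify p) x := by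
  rw [simplify_apply p x]
  refine max_le ?_ ?_
  · exact add_nonneg (mul_nonneg hα0 (add_nonneg (hs x) (hr _)))
      (mul_nonneg (sub_nonneg.2 hα1) (lazyWalk_nonneg _ (simplify_nonneg p) x))
  · have hwalk := mul_le_mul_of_nonneg_left (lazyWalk_sub_lazyWalk_swap_le G p x)
      (sub_nonneg.2 hα1)
    linarith [happr.eq_add_lazyWalk x, happr.eq_add_lazyWalk x.swap, mul_nonneg hα0 (hs x.swap),
      mul_nonneg hα0 (hr x)]

theorem exists_threshold_sweepSet {W : Type*} [Fintype W] (q d : W → ℝ) (hd : ∀ x, 0 < d x)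
    (ord : Fin (Fintype.card W) ≃ W)
    (hord : ∀ i j, i ≤ j → q (ord j) / d (ord j) ≤ q (ord i) / d (ord i))
    {j : ℕ} (hj1 : 1 ≤ j) (hj2 : j ≤ Fintype.card W) :
    ∃ τ, (∀ u ∈ sweepSet ord j, τ * d u ≤ q u) ∧
      (∀ u ∉ sweepSet ord j, q u ≤ τ * d u) := by
  let k : Fin (Fintype.card W) := ⟨j - 1, by omega⟩
  refine ⟨q (ord k) / d (ord k), fun u hu => ?_, fun u hu => ?_⟩
  · simp only [sweepSet, mem_filter, mem_univ, true_and] at hu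
    have hle := hord (ord.symm u) k (Fin.le_def.2 (by simp only [k]; omega))
    rw [ord.apply_symm_apply] at hle
    exact (le_div_iff₀ (hd u)).1 hle
  · simp only [sweepSet, mem_filter, mem_univ, true_and, not_lt] at hu
    have hle := hord k (ord.symm u) (Fin.le_def.2 (by simp only [k]; omega))
    rw [ord.apply_symm_apply] at hle
    exact (div_le_iff₀ (hd u)).1 hle

theorem statement12_general (G : SimpleGraph V) (hdeg : ∀ v, 0 < deg G v)
    (α : ℝ) (hα0 : 0 < α) (hα1 : α ≤ 1)
    (s r p' : V ⊕ V → ℝ) (hs : ∀ x, 0 ≤ s x) (hr : ∀ x, 0 ≤ r x)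
    (happr : IsApr (doubleCover G) α s r p')
    (ord : Fin (Fintype.card (V ⊕ V)) ≃ (V ⊕ V))
    (hord : ∀ i j, i ≤ j →
      simplify p' (ord j) / (deg (doubleCover G) (ord j) : ℝ)
        ≤ simplify p' (ord i) / (deg (doubleCover G) (ord i) : ℝ))
    (j : ℕ) (hj1 : 1 ≤ j) (hj2 : j ≤ 2 * Fintype.card V - 1) :
    lsCurve (doubleCover G) (simplify p')
        (vol (doubleCover G) (sweepSet ord j) : ℝ)
      ≤ α * (lsCurve (doubleCover G) s (vol (doubleCover G) (sweepSet ord j) : ℝ)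
              + lsCurve (doubleCover G) r (vol (doubleCover G) (sweepSet ord j) : ℝ))
        + (1 - α) * (1/2) *
          (lsCurve (doubleCover G) (simplify p')
              ((vol (doubleCover G) (sweepSet ord j) : ℝ)
                - (cutEdges (doubleCover G) (sweepSet ord j) (sweepSet ord j)ᶜ : ℝ))
            + lsCurve (doubleCover G) (simplify p')
              ((vol (doubleCover G) (sweepSet ord j) : ℝ)
                + (cutEdges (doubleCover G) (sweepSet ord j) (sweepSet ord j)ᶜ : ℝ))) := by
  set H := doubleCover G
  set S := sweepSet ord j
  obtain ⟨τ, hin, hout⟩ := exists_threshold_sweepSet (simplify p') (fun x => (deg H x : ℝ))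
    (fun x => Nat.cast_pos.2 (deg_doubleCover_pos G hdeg x)) ord hord hj1
    (by rw [Fintype.card_sum]; omega)
  have hpoint : ∑ x ∈ S, simplify p' x
      ≤ α * (∑ x ∈ S, s x + ∑ x ∈ S, r x.swap)
        + (1 - α) * ∑ x ∈ S, lazyWalk H (simplify p') x :=
    calc ∑ x ∈ S, simplify p' x
        ≤ ∑ x ∈ S, (α * (s x + r x.swap) + (1 - α) * lazyWalk H (simplify p') x) :=
          sum_le_sum fun x _ => simplify_le_of_isApr G hα0.le hα1 hs hr happr x
      _ = _ := by rw [sum_add_distrib, ← mul_sum, ← mul_sum, sum_add_distrib]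
  have hsr := mul_le_mul_of_nonneg_left
    (add_le_add (sum_le_lsCurve_vol H s S) (sum_swap_le_lsCurve_vol G r S)) hα0.le
  have hwalk := mul_le_mul_of_nonneg_left (sum_lazyWalk_le_lsCurve H (simplify p') S)
    (sub_nonneg.2 hα1)
  rw [lsCurve_vol_eq_sum_of_threshold H _ S τ hin hout]
  linarith

/-- Let `G` be a graph on `n` vertices with positive degrees
everywhere and double cover `H`. Let `α ∈ (0,1]`, `s, r` nonnegative with
`apr_H(α,s,r)` entrywise nonnegative, and `p = σ∘apr_H(α,s,r)`. For every
`1 ≤ j ≤ 2n - 1`: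
`p[vol(S_j^p)] ≤ α(s[vol(S_j^p)] + r[vol(S_j^p)])
  + (1-α)(1/2)(p[vol(S_j^p) - |∂(S_j^p)|] + p[vol(S_j^p) + |∂(S_j^p)|])`. -/
theorem statement12 (G : SimpleGraph V) (hdeg : ∀ v, 0 < deg G v)
    (α : ℝ) (hα0 : 0 < α) (hα1 : α ≤ 1)
    (s r p' : V ⊕ V → ℝ) (hs : ∀ x, 0 ≤ s x) (hr : ∀ x, 0 ≤ r x)
    (happr : IsApr (doubleCover G) α s r p') (hp' : ∀ x, 0 ≤ p' x)
    (ord : Fin (Fintype.card (V ⊕ V)) ≃ (V ⊕ V))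
    (hord : ∀ i j, i ≤ j →
      simplify p' (ord j) / (deg (doubleCover G) (ord j) : ℝ)
        ≤ simplify p' (ord i) / (deg (doubleCover G) (ord i) : ℝ))
    (j : ℕ) (hj1 : 1 ≤ j) (hj2 : j ≤ 2 * Fintype.card V - 1) :
    lsCurve (doubleCover G) (simplify p')
        (vol (doubleCover G) (sweepSet ord j) : ℝ)
      ≤ α * (lsCurve (doubleCover G) s (vol (doubleCover G) (sweepSet ord j) : ℝ)
              + lsCurve (doubleCover G) r (vol (doubleCover G) (sweepSet ord j) : ℝ))
        + (1 - α) * (1/2) *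
          (lsCurve (doubleCover G) (simplify p')
              ((vol (doubleCover G) (sweepSet ord j) : ℝ)
                - (cutEdges (doubleCover G) (sweepSet ord j) (sweepSet ord j)ᶜ : ℝ))
            + lsCurve (doubleCover G) (simplify p')
              ((vol (doubleCover G) (sweepSet ord j) : ℝ)
                + (cutEdges (doubleCover G) (sweepSet ord j) (sweepSet ord j)ᶜ : ℝ))) :=
  statement12_general G hdeg α hα0 hα1 s r p' hs hr happr ord hord j hj1 hj2

end Paper
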